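/- arXiv:2407.12595 — 9 statements merged into one kernel-verified Lean document; each statement's English description precedes it below -/
import Mathlib

section
/- Given a finite undirected simple graph G=(V,E), if an orientation Ḡ of G has maximum out-degree Δ and there is a nonempty subset S of vertices such that Δ = ⌈|E(S)|/|S|⌉, then every orientation of G has maximum out-degree at least Δ; that is, Δ is the optimum (minimum possible) maximum out-degree. -/
open Finset

/-- An orientation of a simple graph `G`: a choice, for each edge `{u,v}` of `G`,
of exactly one of the directed edges `(u,v)`, `(v,u)`. -/
structure GraphOrientation {V : Type*} (G : SimpleGraph V) where
  dir : V → V → Bool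
  dir_adj : ∀ u v, dir u v = true → G.Adj u v
  exactly_one : ∀ u v, G.Adj u v → (dir u v = true ↔ ¬ dir v u = true)

/-- Out-degree of `v` w.r.t. a directed-edge relation `d`. -/
def outDegF {V : Type*} [Fintype V] (d : V → V → Bool) (v : V) : ℕ :=
  (Finset.univ.filter fun w => d v w = true).card

/-- Out-degree of a vertex in an orientation. -/
def GraphOrientation.outDeg {V : Type*} [Fintype V] {G : SimpleGraph V}
    (o : GraphOrientation G) (v : V) : ℕ := outDegF o.dir v

/-- Maximum out-degree `Δ` of an orientation. -/
def GraphOrientation.maxOutDeg {V : Type*} [Fintype V] {G : SimpleGraph V}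
    (o : GraphOrientation G) : ℕ := Finset.univ.sup o.outDeg

/-- `|E(S)|`: the number of edges of `G` with both endpoints in `S`. -/
def edgeCount {V : Type*} [Fintype V] [DecidableEq V] (G : SimpleGraph V)
    [DecidableRel G.Adj] (S : Finset V) : ℕ :=
  (G.edgeFinset.filter fun e => ∀ x ∈ e, x ∈ S).card

/-- A directed path in an orientation: a list of distinct vertices, of length at
least two (i.e. `k ≥ 1` edges), with consecutive vertices joined by directed edges. -/
def IsDirPath {V : Type*} {G : SimpleGraph V} (o : GraphOrientation G) (p : List V) : Prop :=
  p.Nodup ∧ 2 ≤ p.length ∧ List.Chain' (fun a b => o.dir a b = true) p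

/-- A directed path from `a` to `b`. -/
def IsPathFrom {V : Type*} {G : SimpleGraph V} (o : GraphOrientation G)
    (p : List V) (a b : V) : Prop :=
  IsDirPath o p ∧ p.head? = some a ∧ p.getLast? = some b

/-- Invariant 1: there is no improving path between any two vertices, i.e. no directed
path `⟨a,…,b⟩` with `odeg(a) > odeg(b) + 1`. -/
def Invariant1 {V : Type*} [Fintype V] {G : SimpleGraph V} (o : GraphOrientation G) : Prop :=
  ∀ p a b, IsPathFrom o p a b → o.outDeg a ≤ o.outDeg b + 1

/-- Invariant 2: there is no improving path starting at a vertex of maximum out-degree. -/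
def Invariant2 {V : Type*} [Fintype V] {G : SimpleGraph V} (o : GraphOrientation G) : Prop :=
  ∀ p a b, IsPathFrom o p a b → o.outDeg a = o.maxOutDeg → o.outDeg a ≤ o.outDeg b + 1

/-- Flipping the directed path `p`: every directed edge `(v_i, v_{i+1})` of `p`
is replaced by the reversed edge `(v_{i+1}, v_i)`; all other edges are unchanged. -/
def flipDir {V : Type*} [DecidableEq V] (d : V → V → Bool) (p : List V) : V → V → Bool :=
  fun a b => if (a, b) ∈ p.zip p.tail ∨ (b, a) ∈ p.zip p.tail then d b a else d a b

/-- `G + {u,v}`: the graph obtained from `G` by inserting the edge `{u,v}`. -/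
def addE {V : Type*} (G : SimpleGraph V) (u v : V) : SimpleGraph V :=
  G ⊔ SimpleGraph.fromEdgeSet {s(u, v)}

/-- `G − {u,v}`: the graph obtained from `G` by deleting the edge `{u,v}`. -/
def delE {V : Type*} (G : SimpleGraph V) (u v : V) : SimpleGraph V :=
  G.deleteEdges {s(u, v)}

/-!
Every edge of `E(S)` leaves one of its endpoints, which lies in `S`, so for any orientation
`|E(S)| ≤ ∑_{v ∈ S} odeg(v) ≤ |S| Δ`, i.e. `⌈|E(S)|/|S|⌉ ≤ Δ`.
-/

lemma Nat.ceilDiv_le_of_le_mul {a b c : ℕ} (h : a ≤ b * c) : a ⌈/⌉ b ≤ c := by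
  rcases Nat.eq_zero_or_pos b with rfl | hb
  · simp
  · exact (ceilDiv_le_iff_le_mul hb).2 h

namespace GraphOrientation

variable {V : Type*} {G : SimpleGraph V} (o : GraphOrientation G)

lemma dir_or_dir_of_adj {u v : V} (h : G.Adj u v) : o.dir u v = true ∨ o.dir v u = true := by
  by_cases huv : o.dir u v = true
  · exact Or.inl huv
  · exact Or.inr (by simpa [huv] using (o.exactly_one v u h.symm).not)

variable [Fintype V]

lemma outDeg_le_maxOutDeg (v : V) : o.outDeg v ≤ o.maxOutDeg :=
  Finset.le_sup (Finset.mem_univ v)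

lemma edgeCount_le_sum_outDeg [DecidableEq V] [DecidableRel G.Adj] (S : Finset V) :
    edgeCount G S ≤ ∑ v ∈ S, o.outDeg v := by
  let arcs := S.sigma fun v => Finset.univ.filter fun w => o.dir v w = true
  have hcover : (G.edgeFinset.filter fun e => ∀ x ∈ e, x ∈ S) ⊆
      arcs.image fun a => s(a.1, a.2) := by
    intro e he
    rw [Finset.mem_filter, SimpleGraph.mem_edgeFinset] at he
    obtain ⟨hadj, hS⟩ := he
    induction e with
    | h u v =>
      rcases o.dir_or_dir_of_adj hadj with huv | hvu
      · exact Finset.mem_image.2 ⟨⟨u, v⟩, by simp [arcs, hS u (by simp), huv], rfl⟩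
      · exact Finset.mem_image.2 ⟨⟨v, u⟩, by simp [arcs, hS v (by simp), hvu], Sym2.eq_swap⟩
  calc edgeCount G S ≤ (arcs.image fun a => s(a.1, a.2)).card := Finset.card_le_card hcover
    _ ≤ arcs.card := Finset.card_image_le
    _ = ∑ v ∈ S, o.outDeg v := Finset.card_sigma _ _

lemma edgeCount_ceilDiv_card_le_maxOutDeg [DecidableEq V] [DecidableRel G.Adj]
    (S : Finset V) : edgeCount G S ⌈/⌉ S.card ≤ o.maxOutDeg := by
  refine Nat.ceilDiv_le_of_le_mul ?_
  calc edgeCount G S ≤ ∑ v ∈ S, o.outDeg v := o.edgeCount_le_sum_outDeg S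
    _ ≤ ∑ _v ∈ S, o.maxOutDeg := Finset.sum_le_sum fun v _ => o.outDeg_le_maxOutDeg v
    _ = S.card * o.maxOutDeg := by rw [Finset.sum_const, smul_eq_mul]

end GraphOrientation

theorem maxOutDeg_optimal_of_tight_subset_general {V : Type*} [Fintype V] [DecidableEq V]
    (G : SimpleGraph V) [DecidableRel G.Adj] (o : GraphOrientation G)
    (S : Finset V)
    (htight : o.maxOutDeg = edgeCount G S ⌈/⌉ S.card) :
    ∀ o' : GraphOrientation G, o.maxOutDeg ≤ o'.maxOutDeg := fun o' =>
  htight ▸ o'.edgeCount_ceilDiv_card_le_maxOutDeg S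

/-- If an orientation `Ḡ` of `G` has maximum out-degree `Δ` and there is a
nonempty vertex set `S` with `Δ = ⌈|E(S)|/|S|⌉`, then every orientation of `G` has
maximum out-degree at least `Δ`; i.e. `Δ` is optimal. -/
theorem maxOutDeg_optimal_of_tight_subset {V : Type*} [Fintype V] [DecidableEq V]
    (G : SimpleGraph V) [DecidableRel G.Adj] (o : GraphOrientation G)
    (S : Finset V) (hS : S.Nonempty)
    (htight : o.maxOutDeg = edgeCount G S ⌈/⌉ S.card) :
    ∀ o' : GraphOrientation G, o.maxOutDeg ≤ o'.maxOutDeg :=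
  maxOutDeg_optimal_of_tight_subset_general G o S htight
end

section
/- For a finite undirected simple graph G=(V,E) and an orientation Ḡ of G satisfying Invariant 1 (there is no improving path between any two vertices), the maximum out-degree Δ of Ḡ is optimal; that is, every orientation of G has maximum out-degree at least Δ. -/
open Finset

/-! If some vertex `a` had out-degree larger than the maximum out-degree `Δ'` of another
orientation, look at the set `S` of vertices reachable from `a`. It is closed under out-edges,
so the out-degrees over `S` sum to the number of edges inside `S`, which every orientation
distributes with at most `Δ'` per vertex. Invariant 1 along paths from `a` forces every vertex
of `S` to have out-degree at least `odeg(a) - 1 ≥ Δ'`, and `a` itself more: too many edges. -/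

open Relation

lemma Relation.ReflTransGen.exists_nodup_isChain_cons {α : Type*} {r : α → α → Prop} {a b : α}
    (h : ReflTransGen r a b) :
    ∃ l : List α, (a :: l).IsChain r ∧ (a :: l).getLast? = some b ∧ (a :: l).Nodup := by
  induction h using Relation.ReflTransGen.head_induction_on with
  | refl => exact ⟨[], List.isChain_singleton _, rfl, List.nodup_singleton _⟩
  | @head a c hac _ ih =>
    obtain ⟨l, hchain, hlast, hnodup⟩ := ih
    by_cases ha : a ∈ c :: l
    · -- shortcut the walk at the later visit of `a`
      obtain ⟨s, t, hst⟩ := List.append_of_mem ha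
      have hsuffix : (a :: t) <:+ (c :: l) := ⟨s, hst.symm⟩
      refine ⟨t, hchain.suffix hsuffix, ?_, hsuffix.sublist.nodup hnodup⟩
      rw [← hlast, hst, List.getLast?_append_of_ne_nil _ (List.cons_ne_nil _ _)]
    · exact ⟨c :: l, List.isChain_cons_cons.2 ⟨hac, hchain⟩,
        by rw [List.getLast?_cons_cons, hlast], List.nodup_cons.2 ⟨ha, hnodup⟩⟩

lemma Finset.le_of_sum_le_card_mul {ι : Type*} {S : Finset ι} {f : ι → ℕ} {a : ι} {M : ℕ}
    (ha : a ∈ S) (hf : ∀ w ∈ S, f a ≤ f w + 1) (hsum : ∑ w ∈ S, f w ≤ #S * M) : f a ≤ M := by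
  have hlt : #S * f a < #S * (M + 1) :=
    calc #S * f a = ∑ _w ∈ S, f a := by rw [sum_const, smul_eq_mul]
      _ < ∑ w ∈ S, (f w + 1) := sum_lt_sum hf ⟨a, ha, Nat.lt_succ_self _⟩
      _ = ∑ w ∈ S, f w + #S := by rw [sum_add_distrib, card_eq_sum_ones]
      _ ≤ #S * (M + 1) := by rw [mul_add_one]; omega
  exact Nat.le_of_lt_succ (Nat.lt_of_mul_lt_mul_left hlt)

namespace GraphOrientation

variable {V : Type*} {G : SimpleGraph V}

def outDegIn (o : GraphOrientation G) (S : Finset V) (w : V) : ℕ :=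
  #{x ∈ S | o.dir w x = true}

lemma ite_dir_add_ite_dir_swap (o : GraphOrientation G) (w x : V) [Decidable (G.Adj w x)] :
    ((if o.dir w x = true then 1 else 0) + if o.dir x w = true then 1 else 0) =
      if G.Adj w x then 1 else 0 := by
  by_cases hadj : G.Adj w x
  · have := o.exactly_one w x hadj
    cases h₁ : o.dir w x <;> cases h₂ : o.dir x w <;> simp_all
  · have hwx : o.dir w x ≠ true := fun h => hadj (o.dir_adj w x h)
    have hxw : o.dir x w ≠ true := fun h => hadj (o.dir_adj x w h).symm
    simp [hwx, hxw, hadj]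

lemma sum_outDegIn_eq (o o' : GraphOrientation G) (S : Finset V) :
    ∑ w ∈ S, o.outDegIn S w = ∑ w ∈ S, o'.outDegIn S w := by
  classical
  -- each edge inside `S` is counted once from either end, whatever the orientation
  have hdouble : ∀ d : GraphOrientation G,
      2 * ∑ w ∈ S, d.outDegIn S w = ∑ w ∈ S, ∑ x ∈ S, if G.Adj w x then 1 else 0 := by
    intro d
    simp only [outDegIn, card_filter]
    rw [two_mul]
    nth_rw 2 [sum_comm]
    rw [← sum_add_distrib]
    refine sum_congr rfl fun w _ => ?_
    rw [← sum_add_distrib]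
    exact sum_congr rfl fun x _ => d.ite_dir_add_ite_dir_swap w x
  have := hdouble o
  have := hdouble o'
  omega

variable [Fintype V]

lemma outDegIn_le_outDeg (o : GraphOrientation G) (S : Finset V) (w : V) :
    o.outDegIn S w ≤ o.outDeg w :=
  card_le_card (filter_subset_filter _ (subset_univ S))

lemma outDegIn_eq_outDeg {o : GraphOrientation G} {S : Finset V} {w : V}
    (hS : ∀ x, o.dir w x = true → x ∈ S) : o.outDegIn S w = o.outDeg w :=
  congrArg card <| by
    ext x
    simpa using hS x

lemma outDeg_le_maxOutDeg_s4 (o : GraphOrientation G) (w : V) : o.outDeg w ≤ o.maxOutDeg :=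
  le_sup (mem_univ w)

lemma sum_outDeg_le_card_mul_maxOutDeg {o : GraphOrientation G} {S : Finset V}
    (hS : ∀ w ∈ S, ∀ x, o.dir w x = true → x ∈ S) (o' : GraphOrientation G) :
    ∑ w ∈ S, o.outDeg w ≤ #S * o'.maxOutDeg :=
  calc ∑ w ∈ S, o.outDeg w = ∑ w ∈ S, o.outDegIn S w :=
        (sum_congr rfl fun w hw => outDegIn_eq_outDeg (hS w hw)).symm
    _ = ∑ w ∈ S, o'.outDegIn S w := sum_outDegIn_eq o o' S
    _ ≤ ∑ _w ∈ S, o'.maxOutDeg := sum_le_sum fun w _ =>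
        (o'.outDegIn_le_outDeg S w).trans (o'.outDeg_le_maxOutDeg_s4 w)
    _ = #S * o'.maxOutDeg := by rw [sum_const, smul_eq_mul]

end GraphOrientation

lemma exists_isPathFrom_of_reflTransGen {V : Type*} {G : SimpleGraph V} (o : GraphOrientation G)
    {a b : V} (h : ReflTransGen (fun x y => o.dir x y = true) a b) (hab : a ≠ b) :
    ∃ p, IsPathFrom o p a b := by
  obtain ⟨l, hchain, hlast, hnodup⟩ := h.exists_nodup_isChain_cons
  cases l with
  | nil => exact absurd (by simpa using hlast) hab
  | cons c l => exact ⟨a :: c :: l, ⟨hnodup, by simp, hchain⟩, rfl, hlast⟩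

lemma Invariant1.outDeg_le_outDeg_add_one {V : Type*} [Fintype V] {G : SimpleGraph V}
    {o : GraphOrientation G} (hinv : Invariant1 o) {a b : V}
    (h : ReflTransGen (fun x y => o.dir x y = true) a b) : o.outDeg a ≤ o.outDeg b + 1 := by
  rcases eq_or_ne a b with rfl | hab
  · exact Nat.le_succ _
  · obtain ⟨p, hp⟩ := exists_isPathFrom_of_reflTransGen o h hab
    exact hinv p a b hp

theorem invariant1_optimal_general {V : Type*} [Fintype V]
    {G : SimpleGraph V} (o : GraphOrientation G) (hinv : Invariant1 o) :
    ∀ o' : GraphOrientation G, o.maxOutDeg ≤ o'.maxOutDeg := by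
  classical
  intro o'
  refine Finset.sup_le fun a _ => ?_
  set S : Finset V := {w | ReflTransGen (fun x y => o.dir x y = true) a w}
  have hmem : ∀ w, w ∈ S ↔ ReflTransGen (fun x y => o.dir x y = true) a w := by simp [S]
  have hclosed : ∀ w ∈ S, ∀ x, o.dir w x = true → x ∈ S := fun w hw x hx =>
    (hmem x).2 (((hmem w).1 hw).tail hx)
  exact le_of_sum_le_card_mul ((hmem a).2 .refl)
    (fun w hw => hinv.outDeg_le_outDeg_add_one ((hmem w).1 hw))
    (GraphOrientation.sum_outDeg_le_card_mul_maxOutDeg hclosed o')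

/-- An orientation satisfying Invariant 1 (no improving path between any
two vertices) has optimal maximum out-degree: every orientation of `G` has maximum
out-degree at least `Δ(Ḡ)`. -/
theorem invariant1_optimal {V : Type*} [Fintype V] [DecidableEq V]
    {G : SimpleGraph V} (o : GraphOrientation G) (hinv : Invariant1 o) :
    ∀ o' : GraphOrientation G, o.maxOutDeg ≤ o'.maxOutDeg :=
  invariant1_optimal_general o hinv
end

section
/- Let Ḡ be an orientation of a finite undirected simple graph G=(V,E) satisfying Invariant 1 (no improving path between any two vertices), let {u,v} ∉ E with odeg(u,Ḡ) ≤ odeg(v,Ḡ), and let G̃ be the orientation of G + {u,v} obtained from Ḡ by adding the directed edge (u,v). Then either G̃ satisfies Invariant 1, or there exists an improving path in G̃ starting at u. -/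
open Finset

/-!
An improving path `⟨a, …, b⟩` of `G̃` with `a ≠ u` must use the new arc `(u, v)`: otherwise it
is a path of `Ḡ`, and out-degrees in `G̃` agree with those in `Ḡ` except at `u`, where they grow.
The part `⟨a, …, u⟩` before the arc is then a path of `Ḡ`, so Invariant 1 gives
`odeg(a) ≤ odeg(u, Ḡ) + 1 = odeg(u, G̃)`, and the part `⟨u, v, …, b⟩` is an improving path from `u`.
-/

theorem List.IsChain.of_isChain_or_eq_of_not_infix {α : Type*} {R : α → α → Prop} {u v : α} :
    ∀ {l : List α}, l.IsChain (fun x y => R x y ∨ x = u ∧ y = v) → ¬ [u, v] <:+: l →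
      l.IsChain R
  | [], _, _ => .nil
  | [_], _, _ => .singleton _
  | x :: y :: t, h, huv => by
    rw [List.isChain_cons_cons] at h ⊢
    obtain ⟨hxy | ⟨rfl, rfl⟩, ht⟩ := h
    · exact ⟨hxy, of_isChain_or_eq_of_not_infix ht
        fun h => huv (h.trans (List.suffix_cons _ _).isInfix)⟩
    · exact absurd (List.prefix_append _ _).isInfix huv

section OutDegree

variable {V : Type*} [Fintype V]

theorem outDegF_le_outDegF {d d' : V → V → Bool} (h : ∀ a b, d a b = true → d' a b = true)
    (a : V) : outDegF d a ≤ outDegF d' a :=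
  Finset.card_le_card <| Finset.monotone_filter_right _ fun b _ => h a b

variable {d d' : V → V → Bool} {u v : V}

theorem outDegF_eq_of_ne (hd : ∀ a b, d' a b = true ↔ d a b = true ∨ a = u ∧ b = v) {a : V}
    (hau : a ≠ u) : outDegF d' a = outDegF d a := by
  unfold outDegF
  congr 1
  ext b
  simp [hd, hau]

theorem outDegF_eq_add_one [DecidableEq V]
    (hd : ∀ a b, d' a b = true ↔ d a b = true ∨ a = u ∧ b = v) (huv : d u v ≠ true) :
    outDegF d' u = outDegF d u + 1 := by
  unfold outDegF
  have : Finset.univ.filter (d' u · = true) = insert v (Finset.univ.filter (d u · = true)) := by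
    ext b
    simp only [Finset.mem_filter, Finset.mem_univ, true_and, Finset.mem_insert, hd]
    tauto
  rw [this, Finset.card_insert_of_notMem (by simpa using huv)]

end OutDegree

section Paths

variable {V : Type*} {G : SimpleGraph V} {o : GraphOrientation G} {p q : List V}

theorem IsDirPath.infix (hp : IsDirPath o p) (hq : q <:+: p) (hlen : 2 ≤ q.length) :
    IsDirPath o q :=
  ⟨hp.1.sublist hq.sublist, hlen, hp.2.2.infix hq⟩

variable {s t : List V} {a b x : V}

theorem IsPathFrom.left_of_append_cons (hp : IsPathFrom o (s ++ x :: t) a b) (hs : s ≠ []) :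
    IsPathFrom o (s ++ [x]) a x := by
  obtain ⟨c, s, rfl⟩ := List.exists_cons_of_ne_nil hs
  exact ⟨hp.1.infix ⟨[], t, by simp⟩ (by simp), by simpa using hp.2.1, List.getLast?_concat⟩

theorem IsPathFrom.right_of_append_cons (hp : IsPathFrom o (s ++ x :: t) a b) (ht : t ≠ []) :
    IsPathFrom o (x :: t) x b := by
  refine ⟨hp.1.infix (List.suffix_append _ _).isInfix ?_, rfl, ?_⟩
  · simpa [Nat.one_le_iff_ne_zero] using ht
  · simpa [List.getLast?_append, List.getLast?_cons, ht] using hp.2.2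

theorem IsPathFrom.of_not_infix {G' : SimpleGraph V} {o' : GraphOrientation G'} {u v : V}
    (hdir : ∀ a b, o'.dir a b = true → o.dir a b = true ∨ a = u ∧ b = v)
    (hp : IsPathFrom o' p a b) (huv : ¬ [u, v] <:+: p) : IsPathFrom o p a b :=
  ⟨⟨hp.1.1, hp.1.2.1, (hp.1.2.2.imp hdir).of_isChain_or_eq_of_not_infix huv⟩, hp.2⟩

end Paths

theorem insert_invariant1_or_improving_from_u_general {V : Type*} [Fintype V] [DecidableEq V]
    {G : SimpleGraph V} (o : GraphOrientation G) (hinv : Invariant1 o)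
    (u v : V) (hE : ¬ G.Adj u v)
    (ot : GraphOrientation (addE G u v))
    (hot : ∀ a b, ot.dir a b = true ↔ (o.dir a b = true ∨ (a = u ∧ b = v))) :
    Invariant1 ot ∨
      ∃ p w, IsPathFrom ot p u w ∧ ot.outDeg w + 1 < ot.outDeg u := by
  refine or_iff_not_imp_left.2 fun hI => ?_
  obtain ⟨p, a, b, hp, himp⟩ :
      ∃ p a b, IsPathFrom ot p a b ∧ ot.outDeg b + 1 < ot.outDeg a := by
    simpa [Invariant1] using hI
  by_cases hau : a = u
  · exact ⟨p, b, hau ▸ hp, hau ▸ himp⟩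
  have hdeg_a : ot.outDeg a = o.outDeg a := outDegF_eq_of_ne hot hau
  by_cases huv : [u, v] <:+: p
  · obtain ⟨s, t, rfl⟩ := huv
    rw [List.append_assoc, List.cons_append, List.singleton_append] at hp
    have hs : s ≠ [] := by
      rintro rfl
      exact hau (by simpa using hp.2.1.symm)
    have hv : v ∉ s ++ [u] := fun h =>
      List.disjoint_of_nodup_append (l₁ := s ++ [u]) (by simpa using hp.1.1) h List.mem_cons_self
    have hpre : IsPathFrom o (s ++ [u]) a u :=
      (hp.left_of_append_cons hs).of_not_infix (fun x y => (hot x y).1)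
        fun h => hv (h.subset (by simp))
    have hdeg_u : ot.outDeg u = o.outDeg u + 1 :=
      outDegF_eq_add_one hot fun h => hE (o.dir_adj u v h)
    have hau_deg : o.outDeg a ≤ o.outDeg u + 1 := hinv _ _ _ hpre
    exact ⟨_, b, hp.right_of_append_cons (List.cons_ne_nil _ _), by omega⟩
  · exfalso
    have hab_deg : o.outDeg a ≤ o.outDeg b + 1 :=
      hinv p a b (hp.of_not_infix (fun x y => (hot x y).1) huv)
    have hb_deg : o.outDeg b ≤ ot.outDeg b :=
      outDegF_le_outDegF (fun x y h => (hot x y).2 (.inl h)) b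
    omega

/-- Insert an edge `{u,v} ∉ E` with `odeg(u) ≤ odeg(v)` into an
orientation satisfying Invariant 1, directed as `(u,v)`. Then either the resulting
orientation `G̃` satisfies Invariant 1, or there is an improving path in `G̃`
starting at `u`. -/
theorem insert_invariant1_or_improving_from_u {V : Type*} [Fintype V] [DecidableEq V]
    {G : SimpleGraph V} (o : GraphOrientation G) (hinv : Invariant1 o)
    (u v : V) (hne : u ≠ v) (hE : ¬ G.Adj u v) (hdeg : o.outDeg u ≤ o.outDeg v)
    (ot : GraphOrientation (addE G u v))
    (hot : ∀ a b, ot.dir a b = true ↔ (o.dir a b = true ∨ (a = u ∧ b = v))) :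
    Invariant1 ot ∨
      ∃ p w, IsPathFrom ot p u w ∧ ot.outDeg w + 1 < ot.outDeg u :=
  insert_invariant1_or_improving_from_u_general o hinv u v hE ot hot
end

section
/- Let Ḡ be an orientation of a finite undirected simple graph G=(V,E) satisfying Invariant 1 (no improving path between any two vertices), let {u,v} ∈ E be oriented from u to v in Ḡ, and let G̃ be the orientation of G − {u,v} obtained from Ḡ by removing the directed edge (u,v). Then either G̃ satisfies Invariant 1, or there exists an improving path in G̃ ending at u. -/
open Finset

/-- Delete an edge `{u,v} ∈ E` oriented from `u` to `v` from an
orientation satisfying Invariant 1. Then either the resulting orientation `G̃`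
satisfies Invariant 1, or there is an improving path in `G̃` ending at `u`. -/
theorem delete_invariant1_or_improving_to_u {V : Type*} [Fintype V] [DecidableEq V]
    {G : SimpleGraph V} (o : GraphOrientation G) (hinv : Invariant1 o)
    (u v : V) (hdir : o.dir u v = true)
    (ot : GraphOrientation (delE G u v))
    (hot : ∀ a b, ot.dir a b = true ↔ (o.dir a b = true ∧ ¬ (a = u ∧ b = v))) :
    Invariant1 ot ∨
      ∃ p w, IsPathFrom ot p w u ∧ ot.outDeg u + 1 < ot.outDeg w := by
  by_cases hI : Invariant1 ot
  · exact Or.inl hI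
  · right
    simp only [Invariant1, not_forall] at hI
    obtain ⟨p, a, b, hpath, hlt⟩ := hI
    push_neg at hlt
    have hdir' : ∀ x y, ot.dir x y = true → o.dir x y = true := fun x y h => ((hot x y).mp h).1
    have hpath' : IsPathFrom o p a b := by
      obtain ⟨⟨hnd, hlen, hch⟩, hh, hl⟩ := hpath
      exact ⟨⟨hnd, hlen, hch.imp fun a b h => hdir' _ _ h⟩, hh, hl⟩
    have hle : ∀ w, ot.outDeg w ≤ o.outDeg w := by
      intro w
      apply Finset.card_le_card
      intro x hx
      simp only [Finset.mem_filter, Finset.mem_univ, true_and] at *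
      exact hdir' _ _ hx
    have heq : ∀ w, w ≠ u → ot.outDeg w = o.outDeg w := by
      intro w hw
      unfold GraphOrientation.outDeg outDegF
      congr 1
      ext x
      simp only [Finset.mem_filter, Finset.mem_univ, true_and, hot]
      tauto
    by_cases hbu : b = u
    · subst hbu
      exact ⟨p, a, hpath, hlt⟩
    · exfalso
      have := hinv p a b hpath'
      have h1 := hle a
      have h2 := heq b hbu
      omega
end

section
/- Let Ḡ be an orientation of a finite undirected simple graph G=(V,E) satisfying Invariant 1, let {u,v} ∉ E with odeg(u,Ḡ) ≤ odeg(v,Ḡ), let G̃ be the orientation of G + {u,v} obtained from Ḡ by adding the directed edge (u,v), let P be an improving path in G̃ starting at u, let Ḡ' be the orientation obtained from G̃ by flipping P, and let P_f be the inverse (flipped) path of P in Ḡ'. Then every improving path in Ḡ' shares at least one vertex with P_f. -/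
/-!
Outside the vertices of `P`, the orientation `Ḡ'` coincides with `Ḡ`: flipping `P` only
reverses edges with both endpoints on `P`, and the new edge `(u,v)` starts at `u ∈ P`.
Hence a directed path of `Ḡ'` avoiding `P_f` is a directed path of `Ḡ` whose endpoints have
the same out-degrees in both orientations, and Invariant 1 of `Ḡ` forbids it to be improving.
-/

open Finset

theorem flipDir_of_notMem {V : Type*} [DecidableEq V] (d : V → V → Bool) {p : List V}
    {a : V} (ha : a ∉ p) (b : V) : flipDir d p a b = d a b := by
  refine if_neg ?_
  rintro (h | h)
  · exact ha (List.of_mem_zip h).1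
  · exact ha (List.mem_of_mem_tail (List.of_mem_zip h).2)

theorem outDegF_congr {V : Type*} [Fintype V] {d d' : V → V → Bool} {a : V}
    (h : ∀ b, d a b = true ↔ d' a b = true) : outDegF d a = outDegF d' a :=
  congrArg Finset.card (Finset.filter_congr fun b _ => h b)

theorem IsPathFrom.mono {V : Type*} {G H : SimpleGraph V} {o : GraphOrientation G}
    {o' : GraphOrientation H} {p : List V} {a b : V} (hp : IsPathFrom o p a b)
    (h : ∀ x ∈ p, ∀ y, o.dir x y = true → o'.dir x y = true) : IsPathFrom o' p a b :=
  ⟨⟨hp.1.1, hp.1.2.1, hp.1.2.2.imp_of_mem_imp fun x y hx _ => h x hx y⟩, hp.2⟩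

theorem insert_flip_shares_vertex_general {V : Type*} [Fintype V] [DecidableEq V]
    {G : SimpleGraph V} (o : GraphOrientation G) (hinv : Invariant1 o)
    (u v : V)
    (ot : GraphOrientation (addE G u v))
    (hot : ∀ a b, ot.dir a b = true ↔ (o.dir a b = true ∨ (a = u ∧ b = v)))
    (P : List V) (w : V) (hP : IsPathFrom ot P u w)
    (o' : GraphOrientation (addE G u v)) (ho' : o'.dir = flipDir ot.dir P) :
    ∀ q x y, IsPathFrom o' q x y → o'.outDeg y + 1 < o'.outDeg x →
      ∃ z, z ∈ q ∧ z ∈ P.reverse := by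
  intro q x y hq himp
  by_contra! hdisj
  have hu : u ∈ P := List.mem_of_mem_head? hP.2.1
  have agree : ∀ a ∉ P, ∀ b, o'.dir a b = true ↔ o.dir a b = true := fun a ha b => by
    rw [ho', flipDir_of_notMem _ ha, hot]
    exact or_iff_left fun h => ha (h.1 ▸ hu)
  have hoff : ∀ a ∈ q, a ∉ P := fun a ha => List.mem_reverse.not.mp (hdisj a ha)
  have hqo : IsPathFrom o q x y := hq.mono fun a ha b => (agree a (hoff a ha) b).1
  have hx : o'.outDeg x = o.outDeg x :=
    outDegF_congr (agree x (hoff x (List.mem_of_mem_head? hq.2.1)))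
  have hy : o'.outDeg y = o.outDeg y :=
    outDegF_congr (agree y (hoff y (List.mem_of_mem_getLast? hq.2.2)))
  have hbound := hinv q x y hqo
  omega

/-- After inserting `{u,v}` (directed `(u,v)`) into an Invariant-1
orientation and flipping an improving path `P` starting at `u`, every improving path
in the resulting orientation `Ḡ'` shares at least one vertex with the inverse path
`P_f` (the reversal of `P`). -/
theorem insert_flip_shares_vertex {V : Type*} [Fintype V] [DecidableEq V]
    {G : SimpleGraph V} (o : GraphOrientation G) (hinv : Invariant1 o)
    (u v : V) (hne : u ≠ v) (hE : ¬ G.Adj u v) (hdeg : o.outDeg u ≤ o.outDeg v)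
    (ot : GraphOrientation (addE G u v))
    (hot : ∀ a b, ot.dir a b = true ↔ (o.dir a b = true ∨ (a = u ∧ b = v)))
    (P : List V) (w : V) (hP : IsPathFrom ot P u w)
    (himp : ot.outDeg w + 1 < ot.outDeg u)
    (o' : GraphOrientation (addE G u v)) (ho' : o'.dir = flipDir ot.dir P) :
    ∀ q x y, IsPathFrom o' q x y → o'.outDeg y + 1 < o'.outDeg x →
      ∃ z, z ∈ q ∧ z ∈ P.reverse :=
  insert_flip_shares_vertex_general o hinv u v ot hot P w hP o' ho'
end

section
/- Let Ḡ be an orientation of a finite undirected simple graph G=(V,E) satisfying Invariant 1, let {u,v} ∉ E with odeg(u,Ḡ) ≤ odeg(v,Ḡ), let G̃ be the orientation of G + {u,v} obtained from Ḡ by adding the directed edge (u,v), and let P be an improving path in G̃ starting at u. Then the orientation Ḡ' obtained from G̃ by flipping P contains no improving path; that is, Ḡ' satisfies Invariant 1. -/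
open Finset

/-!
Let `k = odeg(w, Ḡ)`. Flipping `P` lowers the out-degree of `u` by one and raises that of `w`
by one, so `Ḡ'` has the out-degrees of `Ḡ` except at `w`, where it has `k + 1`; Invariant 1
for `Ḡ` forces `odeg(u, Ḡ) = k + 1 ≤ odeg(v, Ḡ)`. Every edge of `Ḡ'` that is not an edge of `Ḡ`
(a reversed edge of `P`, or `(u, v)` when `P` does not use it) leads from a vertex reaching `w`
in `Ḡ` to a vertex reachable in `Ḡ` from `u` or `v`; vertices of the first kind have out-degree
at most `k + 1`, those of the second kind at least `k`, and `w` is of both kinds. So the ends of a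
directed path of `Ḡ'` are either joined by a walk of `Ḡ`, where Invariant 1 for `Ḡ` applies, or
of the first and the second kind respectively; in neither case is the path improving.
-/

namespace Relation.ReflTransGen

variable {α : Type*} {r r' : α → α → Prop} {a b : α}

theorem exists_nodup_isChain (h : ReflTransGen r a b) :
    ∃ l : List α, l.Nodup ∧ l.IsChain r ∧ l.head? = some a ∧ l.getLast? = some b := by
  induction h using head_induction_on with
  | refl => exact ⟨[b], List.nodup_singleton b, .singleton b, rfl, rfl⟩
  | @head a c hac _ ih =>
    obtain ⟨l, hnd, hch, hhd, hlast⟩ := ih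
    by_cases ha : a ∈ l
    · obtain ⟨s, t, rfl⟩ := List.append_of_mem ha
      refine ⟨a :: t, (List.nodup_append.mp hnd).2.1, hch.right_of_append, rfl, ?_⟩
      rwa [List.getLast?_append_of_ne_nil _ (List.cons_ne_nil a t)] at hlast
    · obtain ⟨t, rfl⟩ := List.head?_eq_some_iff.mp hhd
      refine ⟨a :: c :: t, List.nodup_cons.mpr ⟨ha, hnd⟩, .cons_cons hac hch, rfl, ?_⟩
      rwa [List.getLast?_cons_cons]

theorem or_of_forall_rel {L H : α → Prop} (h : ReflTransGen r' a b)
    (hL : ∀ x y, r x y → L y → L x) (hH : ∀ x y, r x y → H x → H y)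
    (hr' : ∀ x y, r' x y → r x y ∨ L x ∧ H y) : ReflTransGen r a b ∨ L a ∧ H b := by
  have hL' : ∀ x y, ReflTransGen r x y → L y → L x := fun x y hxy hy => by
    induction hxy using head_induction_on with
    | refl => exact hy
    | head hxz _ ih => exact hL _ _ hxz ih
  induction h with
  | refl => exact .inl .refl
  | @tail m c _ hmc ih =>
    rcases ih, hr' m c hmc with ⟨ham | ⟨haL, hmH⟩, hmc | ⟨hmL, hcH⟩⟩
    · exact .inl (ham.tail hmc)
    · exact .inr ⟨hL' _ _ ham hmL, hcH⟩
    · exact .inr ⟨haL, hH m c hmc hmH⟩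
    · exact .inr ⟨haL, hcH⟩

end Relation.ReflTransGen

namespace List

variable {α : Type*} {r : α → α → Prop} {l : List α} {x y a b : α}

theorem IsChain.rel_of_mem_zip_tail (h : l.IsChain r) (hxy : (x, y) ∈ l.zip l.tail) : r x y := by
  induction l with
  | nil => simp at hxy
  | cons a t ih =>
    cases t with
    | nil => simp at hxy
    | cons b t =>
      rw [isChain_cons_cons] at h
      simp only [tail_cons, zip_cons_cons, mem_cons, Prod.mk.injEq] at hxy
      rcases hxy with ⟨rfl, rfl⟩ | hxy
      · exact h.1
      · exact ih h.2 hxy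

theorem IsChain.reflTransGen_of_head? (h : l.IsChain r) (ha : l.head? = some a) (hx : x ∈ l) :
    Relation.ReflTransGen r a x := by
  obtain ⟨t, rfl⟩ := head?_eq_some_iff.mp ha
  exact h.induction (Relation.ReflTransGen r a) _ (fun _ _ hyz hy => hy.tail hyz)
    (fun _ => .refl) x hx

theorem IsChain.reflTransGen_of_getLast? (h : l.IsChain r) (hb : l.getLast? = some b)
    (hx : x ∈ l) : Relation.ReflTransGen r x b := by
  obtain ⟨t, rfl⟩ := getLast?_eq_some_iff.mp hb
  exact h.backwards_induction (Relation.ReflTransGen r · b) _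
    (fun _ _ hyz hz => hz.head hyz) (fun _ => by simp [Relation.ReflTransGen.refl]) x hx

end List

namespace GraphOrientation

variable {V : Type*} {G : SimpleGraph V}

abbrev Reach (o : GraphOrientation G) : V → V → Prop :=
  Relation.ReflTransGen fun a b => o.dir a b = true

theorem dir_asymm (o : GraphOrientation G) {x y : V} (h : o.dir x y = true) :
    o.dir y x = false := by
  simpa using (o.exactly_one x y (o.dir_adj x y h)).mp h

end GraphOrientation

namespace IsPathFrom

variable {V : Type*} {G : SimpleGraph V} {o : GraphOrientation G} {p : List V} {a b : V}

theorem exists_eq_cons_cons (h : IsPathFrom o p a b) : ∃ c t, p = a :: c :: t := by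
  obtain ⟨⟨-, hlen, -⟩, ha, -⟩ := h
  match p, hlen, ha with
  | x :: c :: t, _, ha => exact ⟨c, t, by simp_all⟩

theorem ne (h : IsPathFrom o p a b) : a ≠ b := by
  obtain ⟨c, t, rfl⟩ := h.exists_eq_cons_cons
  obtain ⟨⟨hnd, -, -⟩, -, hb⟩ := h
  rw [List.getLast?_cons_cons] at hb
  exact fun hab => (List.nodup_cons.mp hnd).1 (hab ▸ List.mem_of_getLast? hb)

theorem reach (h : IsPathFrom o p a b) : o.Reach a b :=
  List.IsChain.reflTransGen_of_getLast? h.1.2.2 h.2.2 (List.mem_of_mem_head? h.2.1)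

end IsPathFrom

theorem Invariant1.outDeg_le_of_reach {V : Type*} [Fintype V] {G : SimpleGraph V}
    {o : GraphOrientation G} (hinv : Invariant1 o) {a b : V} (h : o.Reach a b) :
    o.outDeg a ≤ o.outDeg b + 1 := by
  obtain rfl | hab := eq_or_ne a b
  · omega
  obtain ⟨l, hnd, hch, ha, hb⟩ := h.exists_nodup_isChain
  refine hinv l a b ⟨⟨hnd, ?_, hch⟩, ha, hb⟩
  match l, ha, hb with
  | [_], ha, hb => simp_all
  | _ :: _ :: _, _, _ => simp

theorem outDegF_eq_sum {V : Type*} [Fintype V] (d : V → V → Bool) (x : V) :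
    outDegF d x = ∑ y, if d x y = true then 1 else 0 :=
  card_filter _ _

section Flip

variable {V : Type*} [DecidableEq V] {d : V → V → Bool}

theorem flipDir_singleton (a : V) : flipDir d [a] = d := by
  funext x y
  simp [flipDir]

theorem flipDir_cons_cons {a c : V} {t : List V} (ha : a ∉ c :: t) :
    flipDir d (a :: c :: t) = flipDir (flipDir d [a, c]) (c :: t) := by
  funext x y
  have hzip : ∀ {x y}, (x, y) ∈ (c :: t).zip t → x ≠ a ∧ y ≠ a := fun h => by
    obtain ⟨hx, hy⟩ := List.of_mem_zip h
    exact ⟨fun e => ha (e ▸ hx), fun e => ha (e ▸ List.mem_cons_of_mem c hy)⟩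
  simp only [flipDir, List.tail_cons, List.zip_cons_cons, List.zip_nil_right, List.mem_cons,
    Prod.mk.injEq]
  grind

theorem flipDir_asymm (hd : ∀ x y, d x y = true → d y x = false) (p : List V) (x y : V)
    (h : flipDir d p x y = true) : flipDir d p y x = false := by
  unfold flipDir at h ⊢
  grind

variable [Fintype V]

theorem sum_ite_pair_eq (x a c : V) :
    ∑ y : V, (if (x, y) = (a, c) then 1 else 0) = if x = a then 1 else 0 := by
  simp [Prod.ext_iff, ite_and]

theorem outDegF_eq_add_of_insert {d' : V → V → Bool} {u v : V}
    (hd' : ∀ a b, d' a b = true ↔ d a b = true ∨ a = u ∧ b = v) (huv : d u v = false) (x : V) :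
    outDegF d' x = outDegF d x + if x = u then 1 else 0 := by
  have key : ∀ y, (if d' x y = true then 1 else 0) =
      (if d x y = true then 1 else 0) + (if (x, y) = (u, v) then 1 else 0) := by
    intro y
    have := hd' x y
    simp only [Prod.mk.injEq]
    grind
  rw [outDegF_eq_sum, outDegF_eq_sum, ← sum_ite_pair_eq x u v, ← sum_add_distrib]
  exact sum_congr rfl fun y _ => key y

theorem outDegF_flipDir_pair {a c : V} (hac : d a c = true) (hca : d c a = false) (x : V) :
    outDegF (flipDir d [a, c]) x + (if x = a then 1 else 0) =
      outDegF d x + (if x = c then 1 else 0) := by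
  have key : ∀ y, (if flipDir d [a, c] x y = true then 1 else 0) +
      (if (x, y) = (a, c) then 1 else 0) =
      (if d x y = true then 1 else 0) + (if (x, y) = (c, a) then 1 else 0) := by
    intro y
    simp only [flipDir, List.tail_cons, List.zip_cons_cons, List.zip_nil_right,
      List.mem_singleton, Prod.mk.injEq]
    grind
  rw [outDegF_eq_sum, outDegF_eq_sum, ← sum_ite_pair_eq x a c, ← sum_ite_pair_eq x c a,
    ← sum_add_distrib, ← sum_add_distrib]
  exact sum_congr rfl fun y _ => key y

theorem outDegF_flipDir (hd : ∀ x y, d x y = true → d y x = false) {p : List V} {a b : V}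
    (hnd : p.Nodup) (hch : p.IsChain (d · · = true)) (ha : p.head? = some a)
    (hb : p.getLast? = some b) (x : V) :
    outDegF (flipDir d p) x + (if x = a then 1 else 0) =
      outDegF d x + (if x = b then 1 else 0) := by
  induction p generalizing d a with
  | nil => simp at ha
  | cons a' t ih =>
    obtain rfl : a' = a := by simpa using ha
    cases t with
    | nil =>
      obtain rfl : a' = b := by simpa using hb
      rw [flipDir_singleton]
    | cons c t =>
      have hat := (List.nodup_cons.mp hnd).1
      rw [List.isChain_cons_cons] at hch
      have hch' : (c :: t).IsChain (flipDir d [a', c] · · = true) :=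
        hch.2.imp_of_mem_imp fun y z hy hz hyz => by
          have hy : y ≠ a' := fun e => hat (e ▸ hy)
          have hz : z ≠ a' := fun e => hat (e ▸ hz)
          simpa [flipDir, hy, hz] using hyz
      have := ih (flipDir_asymm hd _) (List.nodup_cons.mp hnd).2 hch' rfl
        (by rwa [List.getLast?_cons_cons] at hb)
      have := outDegF_flipDir_pair (x := x) hch.1 (hd _ _ hch.1)
      rw [flipDir_cons_cons hat]
      omega

end Flip

theorem IsPathFrom.outDeg_flip {V : Type*} [Fintype V] [DecidableEq V] {G : SimpleGraph V}
    {o o' : GraphOrientation G} {p : List V} {a b : V} (hp : IsPathFrom o p a b)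
    (ho' : o'.dir = flipDir o.dir p) (x : V) :
    o'.outDeg x + (if x = a then 1 else 0) = o.outDeg x + if x = b then 1 else 0 := by
  unfold GraphOrientation.outDeg
  rw [ho']
  exact outDegF_flipDir (fun _ _ => o.dir_asymm) hp.1.1 hp.1.2.2 hp.2.1 hp.2.2 x

section InsertEdge

variable {V : Type*} {G : SimpleGraph V} {o : GraphOrientation G} {u v w c : V} {T : List V}
  {ot : GraphOrientation (addE G u v)}

theorem outDeg_eq_add_of_insert [Fintype V] [DecidableEq V]
    (hot : ∀ a b, ot.dir a b = true ↔ (o.dir a b = true ∨ (a = u ∧ b = v)))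
    (hE : ¬ G.Adj u v) (x : V) : ot.outDeg x = o.outDeg x + if x = u then 1 else 0 :=
  outDegF_eq_add_of_insert hot (by simpa using fun h => hE (o.dir_adj u v h)) x

theorem List.IsChain.of_insert {t : List V}
    (hot : ∀ a b, ot.dir a b = true ↔ (o.dir a b = true ∨ (a = u ∧ b = v)))
    (hu : u ∉ t) (h : t.IsChain (ot.dir · · = true)) : t.IsChain (o.dir · · = true) :=
  h.imp_of_mem_imp fun x y hx _ hxy =>
    ((hot x y).mp hxy).resolve_right fun ⟨hxu, _⟩ => hu (hxu ▸ hx)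

theorem IsPathFrom.reach_of_insert
    (hot : ∀ a b, ot.dir a b = true ↔ (o.dir a b = true ∨ (a = u ∧ b = v)))
    (hP : IsPathFrom ot (u :: c :: T) u w) :
    (o.dir u c = true ∨ c = v) ∧ ∀ x ∈ c :: T, (o.Reach u x ∨ o.Reach v x) ∧ o.Reach x w := by
  obtain ⟨⟨hnd, -, hch⟩, -, hlast⟩ := hP
  replace hch := List.isChain_cons_cons.mp hch
  have hT := hch.2.of_insert hot (List.nodup_cons.mp hnd).1
  have huc : o.dir u c = true ∨ c = v := by simpa using (hot u c).mp hch.1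
  refine ⟨huc, fun x hx => ⟨?_, hT.reflTransGen_of_getLast? (by simpa using hlast) hx⟩⟩
  have hcx : o.Reach c x := hT.reflTransGen_of_head? rfl hx
  rcases huc with h | rfl
  · exact .inl (hcx.head h)
  · exact .inr hcx

theorem IsPathFrom.dir_or_reach_of_flip_insert {o' : GraphOrientation (addE G u v)} {x y : V}
    [DecidableEq V] (hot : ∀ a b, ot.dir a b = true ↔ (o.dir a b = true ∨ (a = u ∧ b = v)))
    (hP : IsPathFrom ot (u :: c :: T) u w) (ho' : o'.dir = flipDir ot.dir (u :: c :: T))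
    (hxy : o'.dir x y = true) :
    o.dir x y = true ∨ o.Reach x w ∧ (o.Reach u y ∨ o.Reach v y) := by
  obtain ⟨huc, hmem⟩ := hP.reach_of_insert hot
  rw [ho', flipDir] at hxy
  split_ifs at hxy with hflip
  · rcases hflip with hE | hE
    · simp [ot.dir_asymm (hP.1.2.2.rel_of_mem_zip_tail hE)] at hxy
    · obtain ⟨hy, hx⟩ := List.of_mem_zip hE
      refine .inr ⟨(hmem x hx).2, ?_⟩
      rcases List.mem_cons.mp hy with rfl | hy
      · exact .inl .refl
      · exact (hmem y hy).1
  · rcases (hot x y).mp hxy with h | ⟨rfl, rfl⟩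
    · exact .inl h
    · have hcv : c ≠ y := by
        rintro rfl
        exact hflip (.inl (by simp))
      exact .inr ⟨(hmem c (by simp)).2.head (huc.resolve_right hcv), .inr .refl⟩

theorem IsPathFrom.outDeg_eq_of_insert [Fintype V] [DecidableEq V] (hinv : Invariant1 o)
    (hot : ∀ a b, ot.dir a b = true ↔ (o.dir a b = true ∨ (a = u ∧ b = v)))
    (hE : ¬ G.Adj u v) (hdeg : o.outDeg u ≤ o.outDeg v) (hP : IsPathFrom ot (u :: c :: T) u w)
    (himp : ot.outDeg w + 1 < ot.outDeg u) : o.outDeg u = o.outDeg w + 1 := by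
  obtain ⟨huc, hmem⟩ := hP.reach_of_insert hot
  have hcw := (hmem c (by simp)).2
  have hle : o.outDeg u ≤ o.outDeg w + 1 := by
    rcases huc with h | rfl
    · exact hinv.outDeg_le_of_reach (hcw.head h)
    · exact hdeg.trans (hinv.outDeg_le_of_reach hcw)
  rw [outDeg_eq_add_of_insert hot hE, outDeg_eq_add_of_insert hot hE, if_pos rfl,
    if_neg hP.ne.symm] at himp
  omega

end InsertEdge

theorem insert_flip_invariant1_general {V : Type*} [Fintype V] [DecidableEq V]
    {G : SimpleGraph V} (o : GraphOrientation G) (hinv : Invariant1 o)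
    (u v : V) (hE : ¬ G.Adj u v) (hdeg : o.outDeg u ≤ o.outDeg v)
    (ot : GraphOrientation (addE G u v))
    (hot : ∀ a b, ot.dir a b = true ↔ (o.dir a b = true ∨ (a = u ∧ b = v)))
    (P : List V) (w : V) (hP : IsPathFrom ot P u w)
    (himp : ot.outDeg w + 1 < ot.outDeg u)
    (o' : GraphOrientation (addE G u v)) (ho' : o'.dir = flipDir ot.dir P) :
    Invariant1 o' := by
  obtain ⟨c, T, rfl⟩ := hP.exists_eq_cons_cons
  have hdu := hP.outDeg_eq_of_insert hinv hot hE hdeg himp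
  have hdeg' : ∀ x, o'.outDeg x = o.outDeg x + if x = w then 1 else 0 := fun x => by
    have := hP.outDeg_flip ho' x
    rw [outDeg_eq_add_of_insert hot hE] at this
    split_ifs at this ⊢ <;> omega
  have hlow : ∀ x, o.Reach x w → o'.outDeg x ≤ o.outDeg w + 1 := fun x hx => by
    have := hinv.outDeg_le_of_reach hx
    rw [hdeg']
    split_ifs with h
    · rw [h]
    · omega
  have hhigh : ∀ y, o.Reach u y ∨ o.Reach v y → o.outDeg w ≤ o'.outDeg y := by
    rintro y (hy | hy) <;> have := hinv.outDeg_le_of_reach hy <;> rw [hdeg'] <;> omega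
  have hwH : o.Reach u w ∨ o.Reach v w :=
    ((hP.reach_of_insert hot).2 w (List.mem_of_getLast? (by simpa using hP.2.2))).1
  intro Q a b hQ
  rcases hQ.reach.or_of_forall_rel (fun x y hxy hy => hy.head hxy)
      (fun x y hxy hy => hy.imp (·.tail hxy) (·.tail hxy))
      (fun x y => hP.dir_or_reach_of_flip_insert hot ho') with hab | ⟨ha, hb⟩
  · obtain rfl | haw := eq_or_ne a w
    · have := hhigh b (hwH.imp (·.trans hab) (·.trans hab))
      rw [hdeg', if_pos rfl]
      omega
    · have := hinv.outDeg_le_of_reach hab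
      rw [hdeg' a, hdeg' b, if_neg haw]
      omega
  · have := hhigh b hb
    have := hlow a ha
    omega

/-- After inserting `{u,v}` (directed `(u,v)`) into an Invariant-1
orientation and flipping an improving path `P` starting at `u`, the resulting
orientation `Ḡ'` contains no improving path, i.e. satisfies Invariant 1. -/
theorem insert_flip_invariant1 {V : Type*} [Fintype V] [DecidableEq V]
    {G : SimpleGraph V} (o : GraphOrientation G) (hinv : Invariant1 o)
    (u v : V) (hne : u ≠ v) (hE : ¬ G.Adj u v) (hdeg : o.outDeg u ≤ o.outDeg v)
    (ot : GraphOrientation (addE G u v))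
    (hot : ∀ a b, ot.dir a b = true ↔ (o.dir a b = true ∨ (a = u ∧ b = v)))
    (P : List V) (w : V) (hP : IsPathFrom ot P u w)
    (himp : ot.outDeg w + 1 < ot.outDeg u)
    (o' : GraphOrientation (addE G u v)) (ho' : o'.dir = flipDir ot.dir P) :
    Invariant1 o' :=
  insert_flip_invariant1_general o hinv u v hE hdeg ot hot P w hP himp o' ho'
end

section
/- Let Ḡ be an orientation of a finite undirected simple graph G=(V,E) with maximum out-degree Δ satisfying Invariant 2 (no improving path starting at any vertex of out-degree Δ), let {u,v} ∉ E with odeg(u,Ḡ) = odeg(v,Ḡ) = Δ, and let G̃ be the orientation of G + {u,v} obtained from Ḡ by adding the directed edge (u,v). If there is no improving path in G̃ starting at u, then G̃ has maximum out-degree Δ+1, u is the only vertex of out-degree Δ+1 in G̃, and G̃ satisfies Invariant 2. -/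
open Finset

/-! The new arc `(u,v)` raises the out-degree of `u` alone, from `Δ` to `Δ + 1`, so `u` becomes the
unique vertex of maximum out-degree, and Invariant 2 for the new orientation is exactly the absence
of improving paths out of `u`. -/

section AddEdge

variable {V : Type*} [Fintype V]

theorem GraphOrientation.outDeg_le_maxOutDeg_s16 {G : SimpleGraph V} (o : GraphOrientation G)
    (w : V) : o.outDeg w ≤ o.maxOutDeg :=
  Finset.le_sup (Finset.mem_univ w)

variable {d d' : V → V → Bool} {u v : V}

theorem outDegF_of_ne (h : ∀ a b, d' a b = true ↔ d a b = true ∨ (a = u ∧ b = v))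
    {w : V} (hw : w ≠ u) : outDegF d' w = outDegF d w := by
  unfold outDegF
  congr 1
  refine Finset.filter_congr fun x _ => ?_
  simp [h, hw]

theorem outDegF_add_edge (h : ∀ a b, d' a b = true ↔ d a b = true ∨ (a = u ∧ b = v))
    (huv : d u v ≠ true) : outDegF d' u = outDegF d u + 1 := by
  classical
  unfold outDegF
  have hout : (Finset.univ.filter fun x => d' u x = true) =
      insert v (Finset.univ.filter fun x => d u x = true) := by
    ext x
    simp only [Finset.mem_insert, Finset.mem_filter, Finset.mem_univ, true_and, h]
    tauto
  rw [hout, Finset.card_insert_of_notMem (by simpa using huv)]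

variable {G H : SimpleGraph V} {o : GraphOrientation G} {ot : GraphOrientation H}

theorem outDeg_add_edge (hot : ∀ a b, ot.dir a b = true ↔ (o.dir a b = true ∨ (a = u ∧ b = v)))
    (hE : ¬ G.Adj u v) : ot.outDeg u = o.outDeg u + 1 :=
  outDegF_add_edge hot fun h => hE (o.dir_adj u v h)

theorem outDeg_add_edge_le_of_ne
    (hot : ∀ a b, ot.dir a b = true ↔ (o.dir a b = true ∨ (a = u ∧ b = v)))
    {w : V} (hw : w ≠ u) : ot.outDeg w ≤ o.maxOutDeg :=
  (outDegF_of_ne hot hw).trans_le (o.outDeg_le_maxOutDeg_s16 w)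

theorem maxOutDeg_add_edge
    (hot : ∀ a b, ot.dir a b = true ↔ (o.dir a b = true ∨ (a = u ∧ b = v)))
    (hE : ¬ G.Adj u v) (hu : o.outDeg u = o.maxOutDeg) :
    ot.maxOutDeg = o.maxOutDeg + 1 := by
  refine le_antisymm (Finset.sup_le fun w _ => ?_) ?_
  · by_cases hw : w = u
    · rw [hw, outDeg_add_edge hot hE, hu]
    · exact (outDeg_add_edge_le_of_ne hot hw).trans (Nat.le_succ _)
  · rw [← hu, ← outDeg_add_edge hot hE]
    exact ot.outDeg_le_maxOutDeg_s16 u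

theorem eq_of_outDeg_add_edge_eq_succ
    (hot : ∀ a b, ot.dir a b = true ↔ (o.dir a b = true ∨ (a = u ∧ b = v)))
    {w : V} (hw : ot.outDeg w = o.maxOutDeg + 1) : w = u := by
  by_contra hwu
  have := outDeg_add_edge_le_of_ne hot hwu
  omega

end AddEdge

theorem invariant2_of_unique_max {V : Type*} [Fintype V] {G : SimpleGraph V}
    {o : GraphOrientation G} {u : V} (huniq : ∀ w, o.outDeg w = o.maxOutDeg → w = u)
    (hnopath : ¬ ∃ p w, IsPathFrom o p u w ∧ o.outDeg w + 1 < o.outDeg u) :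
    Invariant2 o := by
  intro p a b hpath ha
  obtain rfl := huniq a ha
  by_contra h
  exact hnopath ⟨p, b, hpath, not_le.mp h⟩

theorem insert_peak_no_path_new_max_general {V : Type*} [Fintype V]
    {G : SimpleGraph V} (o : GraphOrientation G)
    (u v : V) (hE : ¬ G.Adj u v)
    (hu : o.outDeg u = o.maxOutDeg)
    (ot : GraphOrientation (addE G u v))
    (hot : ∀ a b, ot.dir a b = true ↔ (o.dir a b = true ∨ (a = u ∧ b = v)))
    (hnopath : ¬ ∃ p w, IsPathFrom ot p u w ∧ ot.outDeg w + 1 < ot.outDeg u) :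
    ot.maxOutDeg = o.maxOutDeg + 1 ∧
    ot.outDeg u = o.maxOutDeg + 1 ∧
    (∀ w, ot.outDeg w = o.maxOutDeg + 1 → w = u) ∧
    Invariant2 ot := by
  have hmax := maxOutDeg_add_edge hot hE hu
  have huniq : ∀ w, ot.outDeg w = o.maxOutDeg + 1 → w = u :=
    fun _ hw => eq_of_outDeg_add_edge_eq_succ hot hw
  refine ⟨hmax, by rw [outDeg_add_edge hot hE, hu], huniq, ?_⟩
  exact invariant2_of_unique_max (fun w hw => huniq w (hmax ▸ hw)) hnopath

/-- Insert `{u,v} ∉ E` with `odeg(u) = odeg(v) = Δ` into an Invariant-2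
orientation of maximum out-degree `Δ`, directed as `(u,v)`. If there is no improving
path in the resulting orientation `G̃` starting at `u`, then `G̃` has maximum
out-degree `Δ + 1`, `u` is the only vertex of out-degree `Δ + 1` in `G̃`, and `G̃`
satisfies Invariant 2. -/
theorem insert_peak_no_path_new_max {V : Type*} [Fintype V] [DecidableEq V]
    {G : SimpleGraph V} (o : GraphOrientation G) (hinv : Invariant2 o)
    (u v : V) (hne : u ≠ v) (hE : ¬ G.Adj u v)
    (hu : o.outDeg u = o.maxOutDeg) (hv : o.outDeg v = o.maxOutDeg)
    (ot : GraphOrientation (addE G u v))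
    (hot : ∀ a b, ot.dir a b = true ↔ (o.dir a b = true ∨ (a = u ∧ b = v)))
    (hnopath : ¬ ∃ p w, IsPathFrom ot p u w ∧ ot.outDeg w + 1 < ot.outDeg u) :
    ot.maxOutDeg = o.maxOutDeg + 1 ∧
    ot.outDeg u = o.maxOutDeg + 1 ∧
    (∀ w, ot.outDeg w = o.maxOutDeg + 1 → w = u) ∧
    Invariant2 ot :=
  insert_peak_no_path_new_max_general o u v hE hu ot hot hnopath
end

section
/- Let Ḡ be an orientation of a finite undirected simple graph G=(V,E) with maximum out-degree Δ satisfying Invariant 2 (no improving path starting at any vertex of out-degree Δ), let {u,v} ∈ E be oriented from u to v in Ḡ with odeg(u,Ḡ) ≤ Δ − 2, and let G̃ be the orientation of G − {u,v} obtained from Ḡ by removing the directed edge (u,v). Then G̃ has maximum out-degree Δ and satisfies Invariant 2. -/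
open Finset

/-- Delete the edge `{u,v} ∈ E`, oriented from `u` to `v`, with
`odeg(u) ≤ Δ − 2`, from an Invariant-2 orientation of maximum out-degree `Δ`. Then the
resulting orientation `G̃` has maximum out-degree `Δ` and satisfies Invariant 2. -/
theorem delete_small_keeps_invariant2 {V : Type*} [Fintype V] [DecidableEq V]
    {G : SimpleGraph V} (o : GraphOrientation G) (hinv : Invariant2 o)
    (u v : V) (hdir : o.dir u v = true) (hdeg : o.outDeg u + 2 ≤ o.maxOutDeg)
    (ot : GraphOrientation (delE G u v))
    (hot : ∀ a b, ot.dir a b = true ↔ (o.dir a b = true ∧ ¬ (a = u ∧ b = v))) :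
    ot.maxOutDeg = o.maxOutDeg ∧ Invariant2 ot := by
  have hdegeq : ∀ w, w ≠ u → ot.outDeg w = o.outDeg w := by
    intro w hw
    unfold GraphOrientation.outDeg outDegF
    congr 1
    apply Finset.filter_congr
    intro b _
    simp only [hot, eq_iff_iff]
    exact ⟨fun h => h.1, fun h => ⟨h, fun hc => hw hc.1⟩⟩
  have hle : ∀ w, ot.outDeg w ≤ o.outDeg w := by
    intro w
    apply Finset.card_le_card
    intro b hb
    simp only [mem_filter, mem_univ, true_and] at *
    exact ((hot w b).mp hb).1
  have hmax : ot.maxOutDeg = o.maxOutDeg := by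
    apply le_antisymm
    · apply Finset.sup_le; intro w _
      exact le_trans (hle w) (Finset.le_sup (mem_univ w))
    · obtain ⟨w, _, hw⟩ := Finset.exists_mem_eq_sup (univ : Finset V) ⟨u, mem_univ u⟩ o.outDeg
      have hwu : w ≠ u := by
        intro h; subst h
        rw [GraphOrientation.maxOutDeg] at hdeg
        omega
      calc o.maxOutDeg = o.outDeg w := hw
        _ = ot.outDeg w := (hdegeq w hwu).symm
        _ ≤ ot.maxOutDeg := Finset.le_sup (mem_univ w)
  refine ⟨hmax, ?_⟩
  intro p a b hp ha
  have hpath : IsPathFrom o p a b := by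
    obtain ⟨⟨hn, hl, hc⟩, h1, h2⟩ := hp
    exact ⟨⟨hn, hl, hc.imp fun x y h => ((hot x y).mp h).1⟩, h1, h2⟩
  have hau : a ≠ u := by
    intro h; subst h
    have h2 := hle a
    rw [ha, hmax] at h2
    omega
  have haeq := hdegeq a hau
  have ha' : o.outDeg a = o.maxOutDeg := by rw [← haeq, ha, hmax]
  have h1 : o.outDeg a ≤ o.outDeg b + 1 := hinv p a b hpath ha'
  have hbu : b ≠ u := by
    intro h; subst h; omega
  rw [← haeq] at h1
  rw [hdegeq b hbu]
  omega
end

section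
/- For every finite undirected simple graph G=(V,E) with V nonempty, the minimum over all orientations Ḡ of G of the maximum out-degree Δ(Ḡ) equals the maximum over all nonempty subsets S ⊆ V of ⌈|E(S)|/|S|⌉, where E(S) is the set of edges of G with both endpoints in S. In particular, there exists an orientation of G containing no improving path between any two vertices, and any such orientation achieves this minimum. -/
open Finset

/-!
Every edge of `E(S)` has its tail in `S`, so `|E(S)| ≤ |S| Δ` for every orientation. Conversely,
reversing an improving path `a ⇝ b` lowers `∑ odeg²` (only `odeg a` drops and `odeg b` rises, by
one each), so an orientation minimising this potential has no improving path. In such an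
orientation let `S` be the set of vertices reachable from a vertex `a` of out-degree `Δ`: it is
closed under out-arcs, so `|E(S)| = ∑_{v ∈ S} odeg v`, and every `v ∈ S` has `odeg v ≥ Δ - 1`,
whence `|E(S)| > |S| (Δ - 1)`, i.e. `⌈|E(S)|/|S|⌉ ≥ Δ`.
-/

namespace List

theorem exists_nodup_isChain_cons_of_relationReflTransGen {α : Type*} {r : α → α → Prop}
    {a b : α} (h : Relation.ReflTransGen r a b) :
    ∃ l, (a :: l).Nodup ∧ IsChain r (a :: l) ∧ getLast (a :: l) (cons_ne_nil _ _) = b := by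
  refine Relation.ReflTransGen.head_induction_on h ⟨[], nodup_singleton _, .singleton _, rfl⟩ ?_
  intro c d hcd _ ⟨l, hnd, hch, hlast⟩
  by_cases hc : c ∈ d :: l
  · -- cut the cycle through `c`: the suffix of the path starting at `c` still ends at `b`
    obtain ⟨s, t, hst⟩ := append_of_mem hc
    have hsuf : c :: t <:+ d :: l := ⟨s, hst.symm⟩
    refine ⟨t, hnd.sublist hsuf.sublist, hch.infix hsuf.isInfix, ?_⟩
    rw [← hlast]
    simp only [hst, getLast_append_of_ne_nil _ (cons_ne_nil c t)]
  · exact ⟨d :: l, nodup_cons.2 ⟨hc, hnd⟩, hch.cons_cons hcd, by rwa [getLast_cons_cons]⟩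

end List

namespace GraphOrientation

variable {V : Type*} {G : SimpleGraph V}

theorem dir_swap_eq_false (o : GraphOrientation G) {u v : V} (h : o.dir u v = true) :
    o.dir v u = false :=
  Bool.eq_false_iff.2 ((o.exactly_one u v (o.dir_adj u v h)).1 h)

theorem dir_or_dir (o : GraphOrientation G) {u v : V} (h : G.Adj u v) :
    o.dir u v = true ∨ o.dir v u = true := by
  by_contra! hn
  exact hn.1 ((o.exactly_one u v h).2 hn.2)

instance (G : SimpleGraph V) : Nonempty (GraphOrientation G) := by
  classical
  obtain ⟨_, -⟩ := exists_wellFoundedLT V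
  exact ⟨{
    dir := fun u v => decide (G.Adj u v ∧ u < v)
    dir_adj := fun u v h => (of_decide_eq_true h).1
    exactly_one := fun u v h => by
      simp [h, h.symm, le_iff_lt_or_eq, G.ne_of_adj h] }⟩

def reverseEdge [DecidableEq V] (o : GraphOrientation G) (e : Sym2 V) : GraphOrientation G where
  dir x y := if s(x, y) = e then o.dir y x else o.dir x y
  dir_adj x y h := by
    split_ifs at h
    · exact (o.dir_adj y x h).symm
    · exact o.dir_adj x y h
  exactly_one x y h := by
    rw [Sym2.eq_swap (a := y)]
    split_ifs
    · exact o.exactly_one y x h.symm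
    · exact o.exactly_one x y h

variable [Fintype V] [DecidableEq V]

theorem outDeg_reverseEdge (o : GraphOrientation G) {u v : V} (huv : o.dir u v = true)
    (x : V) :
    ((o.reverseEdge s(u, v)).outDeg x : ℤ) =
      o.outDeg x - (if x = u then 1 else 0) + (if x = v then 1 else 0) := by
  have hne : u ≠ v := G.ne_of_adj (o.dir_adj u v huv)
  have hvu := o.dir_swap_eq_false huv
  have key : ∀ y, (if (o.reverseEdge s(u, v)).dir x y = true then 1 else 0 : ℤ) =
      (if o.dir x y = true then 1 else 0) - (if x = u ∧ y = v then 1 else 0) +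
        (if x = v ∧ y = u then 1 else 0) := by
    intro y
    simp only [reverseEdge, Sym2.eq_iff]
    by_cases h1 : x = u ∧ y = v
    · obtain ⟨rfl, rfl⟩ := h1; simp [hne, huv, hvu]
    by_cases h2 : x = v ∧ y = u
    · obtain ⟨rfl, rfl⟩ := h2; simp [hne, huv, hvu]
    simp [h1, h2]
  simp only [outDeg, outDegF, card_filter, Nat.cast_sum, Nat.cast_ite, Nat.cast_one,
    Nat.cast_zero, key, sum_add_distrib, sum_sub_distrib]
  by_cases hu : x = u
  · subst hu; simp [hne]
  by_cases hv : x = v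
  · subst hv; simp [hne.symm]
  simp [hu, hv]

/-- Reversing a directed path moves one unit of out-degree from its first vertex to its last. -/
theorem exists_outDeg_eq_of_isChain (o : GraphOrientation G) (a : V) (l : List V)
    (hnd : (a :: l).Nodup) (hch : (a :: l).IsChain fun x y => o.dir x y = true) :
    ∃ o' : GraphOrientation G, ∀ x, (o'.outDeg x : ℤ) = o.outDeg x - (if x = a then 1 else 0) +
      (if x = (a :: l).getLast (List.cons_ne_nil a l) then 1 else 0) := by
  induction l generalizing o a with
  | nil => exact ⟨o, fun x => by rw [List.getLast_singleton]; ring⟩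
  | cons b l ih =>
    have hab := List.isChain_cons_cons.1 hch
    have ha : a ∉ b :: l := (List.nodup_cons.1 hnd).1
    have hch' : (b :: l).IsChain fun x y => (o.reverseEdge s(a, b)).dir x y = true := by
      refine hab.2.imp_of_mem_imp fun x y hx hy hxy => ?_
      have : s(x, y) ≠ s(a, b) := by
        rintro hs
        rcases Sym2.eq_iff.1 hs with ⟨rfl, -⟩ | ⟨-, rfl⟩
        exacts [ha hx, ha hy]
      change (if s(x, y) = s(a, b) then _ else _) = true
      rwa [if_neg this]
    obtain ⟨o', ho'⟩ := ih (o.reverseEdge s(a, b)) b (List.nodup_cons.1 hnd).2 hch'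
    refine ⟨o', fun x => ?_⟩
    rw [ho', outDeg_reverseEdge o hab.1, List.getLast_cons_cons]
    ring

end GraphOrientation

theorem sum_sq_lt_of_eq_sub_add {V : Type*} [Fintype V] [DecidableEq V] {f g : V → ℕ} {a b : V}
    (hg : ∀ x, (g x : ℤ) = f x - (if x = a then 1 else 0) + (if x = b then 1 else 0))
    (hab : f b + 1 < f a) : ∑ x, g x ^ 2 < ∑ x, f x ^ 2 := by
  have hne : a ≠ b := by rintro rfl; omega
  have hsq : ∀ x, (g x : ℤ) ^ 2 = f x ^ 2 +
      ((if x = a then 1 - 2 * (f a : ℤ) else 0) + (if x = b then 2 * (f b : ℤ) + 1 else 0)) := by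
    intro x
    rw [hg]
    by_cases hxa : x = a
    · subst hxa; simp [hne]; ring
    by_cases hxb : x = b
    · subst hxb; simp [hxa]; ring
    simp [hxa, hxb]
  zify
  simp only [hsq, sum_add_distrib, sum_ite_eq', mem_univ, if_true]
  omega

theorem exists_invariant1 {V : Type*} [Fintype V] [DecidableEq V] (G : SimpleGraph V) :
    ∃ o : GraphOrientation G, Invariant1 o := by
  obtain ⟨o, -, hmin⟩ := (measure fun o : GraphOrientation G => ∑ x, o.outDeg x ^ 2).wf.has_min
    Set.univ Set.univ_nonempty
  refine ⟨o, ?_⟩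
  rintro p a b ⟨⟨hnd, -, hch⟩, hhead, hlast⟩
  by_contra! himp
  obtain ⟨l, rfl⟩ := List.head?_eq_some_iff.1 hhead
  rw [List.getLast?_eq_some_getLast (List.cons_ne_nil a l), Option.some_inj] at hlast
  obtain ⟨o', ho'⟩ := o.exists_outDeg_eq_of_isChain a l hnd hch
  exact hmin o' trivial (sum_sq_lt_of_eq_sub_add (hlast ▸ ho') himp)

namespace GraphOrientation

variable {V : Type*} [Fintype V] {G : SimpleGraph V}

def arcsFrom (o : GraphOrientation G) (S : Finset V) : Finset (V × V) :=
  (S ×ˢ univ).filter fun q => o.dir q.1 q.2 = true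

theorem card_arcsFrom (o : GraphOrientation G) (S : Finset V) :
    #(o.arcsFrom S) = ∑ v ∈ S, o.outDeg v := by
  simp only [arcsFrom, outDeg, outDegF, card_filter, sum_product]

theorem outDeg_le_of_reflTransGen {o : GraphOrientation G} (ho : Invariant1 o) {a v : V}
    (h : Relation.ReflTransGen (fun x y => o.dir x y = true) a v) :
    o.outDeg a ≤ o.outDeg v + 1 := by
  obtain ⟨l, hnd, hch, hlast⟩ := List.exists_nodup_isChain_cons_of_relationReflTransGen h
  cases l with
  | nil => rw [List.getLast_singleton] at hlast; exact hlast ▸ Nat.le_succ _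
  | cons b l =>
    refine ho (a :: b :: l) a v ⟨⟨hnd, by simp, hch⟩, rfl, ?_⟩
    rw [List.getLast?_eq_some_getLast (List.cons_ne_nil a _), hlast]

variable [DecidableEq V] [DecidableRel G.Adj]

theorem edgeCount_le_card_arcsFrom (o : GraphOrientation G) (S : Finset V) :
    edgeCount G S ≤ #(o.arcsFrom S) := by
  refine card_le_card_of_surjOn (fun q : V × V => s(q.1, q.2)) ?_
  intro e he
  induction e using Sym2.ind with
  | _ x y =>
    simp only [mem_coe, mem_filter, SimpleGraph.mem_edgeFinset, SimpleGraph.mem_edgeSet,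
      Sym2.mem_iff, forall_eq_or_imp, forall_eq] at he
    obtain ⟨hxy, hx, hy⟩ := he
    rcases o.dir_or_dir hxy with h | h
    · exact ⟨(x, y), by simp [arcsFrom, hx, h], rfl⟩
    · exact ⟨(y, x), by simp [arcsFrom, hy, h], Sym2.eq_swap⟩

theorem card_arcsFrom_le_edgeCount (o : GraphOrientation G) {S : Finset V}
    (hS : ∀ v ∈ S, ∀ w, o.dir v w = true → w ∈ S) :
    #(o.arcsFrom S) ≤ edgeCount G S := by
  refine card_le_card_of_injOn (fun q : V × V => s(q.1, q.2)) ?_ ?_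
  · rintro ⟨v, w⟩ hq
    simp only [arcsFrom, mem_coe, mem_filter, mem_product, mem_univ, and_true] at hq
    simp only [mem_coe, mem_filter, SimpleGraph.mem_edgeFinset, SimpleGraph.mem_edgeSet,
      Sym2.mem_iff, forall_eq_or_imp, forall_eq]
    exact ⟨o.dir_adj v w hq.2, hq.1, hS v hq.1 w hq.2⟩
  · rintro ⟨v, w⟩ hq ⟨v', w'⟩ hq' heq
    simp only [arcsFrom, mem_coe, mem_filter, mem_product, mem_univ, and_true] at hq hq'
    rcases Sym2.eq_iff.1 heq with ⟨rfl, rfl⟩ | ⟨rfl, rfl⟩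
    · rfl
    · simp [o.dir_swap_eq_false hq.2] at hq'

theorem ceilDiv_edgeCount_le_maxOutDeg (o : GraphOrientation G) {S : Finset V}
    (hS : S.Nonempty) : edgeCount G S ⌈/⌉ #S ≤ o.maxOutDeg := by
  rw [ceilDiv_le_iff_le_mul hS.card_pos]
  calc edgeCount G S ≤ ∑ v ∈ S, o.outDeg v := o.card_arcsFrom S ▸ o.edgeCount_le_card_arcsFrom S
    _ ≤ ∑ _v ∈ S, o.maxOutDeg := sum_le_sum fun v _ => le_sup (mem_univ v)
    _ = #S * o.maxOutDeg := by rw [sum_const, smul_eq_mul]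

/-- Closedness turns `∑ v ∈ S, outDeg v` into a count of the edges of `S`, and that sum exceeds
`#S * (outDeg a - 1)`. -/
theorem outDeg_le_ceilDiv_edgeCount (o : GraphOrientation G) {S : Finset V} {a : V}
    (ha : a ∈ S) (hS : ∀ v ∈ S, ∀ w, o.dir v w = true → w ∈ S)
    (hdeg : ∀ v ∈ S, o.outDeg a ≤ o.outDeg v + 1) :
    o.outDeg a ≤ edgeCount G S ⌈/⌉ #S := by
  by_contra! hlt
  have hpos : 0 < o.outDeg a := by omega
  have hle : edgeCount G S ≤ #S * (o.outDeg a - 1) :=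
    (ceilDiv_le_iff_le_mul (card_pos.2 ⟨a, ha⟩)).1 (by omega)
  have hsum : ∑ _v ∈ S, (o.outDeg a - 1) < ∑ v ∈ S, o.outDeg v :=
    sum_lt_sum (fun v hv => by have := hdeg v hv; omega) ⟨a, ha, by omega⟩
  have hcount : ∑ v ∈ S, o.outDeg v ≤ edgeCount G S :=
    o.card_arcsFrom S ▸ o.card_arcsFrom_le_edgeCount hS
  rw [sum_const, smul_eq_mul] at hsum
  omega

theorem maxOutDeg_le_sup_ceilDiv_of_invariant1 {o : GraphOrientation G} (ho : Invariant1 o) :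
    o.maxOutDeg ≤ (univ.filter fun S : Finset V => S.Nonempty).sup
      fun S => edgeCount G S ⌈/⌉ #S := by
  classical
  cases isEmpty_or_nonempty V
  · simp [maxOutDeg]
  obtain ⟨a, -, ha⟩ := exists_mem_eq_sup univ univ_nonempty o.outDeg
  let S := univ.filter (Relation.ReflTransGen (fun x y => o.dir x y = true) a)
  have haS : a ∈ S := mem_filter.2 ⟨mem_univ a, Relation.ReflTransGen.refl⟩
  have hS : ∀ v ∈ S, ∀ w, o.dir v w = true → w ∈ S := fun v hv w hvw =>
    mem_filter.2 ⟨mem_univ w, (mem_filter.1 hv).2.tail hvw⟩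
  calc o.maxOutDeg = o.outDeg a := ha
    _ ≤ edgeCount G S ⌈/⌉ #S := o.outDeg_le_ceilDiv_edgeCount haS hS
      fun v hv => outDeg_le_of_reflTransGen ho (mem_filter.1 hv).2
    _ ≤ _ := le_sup (f := fun S => edgeCount G S ⌈/⌉ #S) (mem_filter.2 ⟨mem_univ S, ⟨a, haS⟩⟩)

end GraphOrientation

theorem min_maxOutDeg_eq_max_ceil_density_general {V : Type*} [Fintype V] [DecidableEq V]
    (G : SimpleGraph V) [DecidableRel G.Adj] :
    (∃ o : GraphOrientation G, Invariant1 o) ∧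
    ∀ o : GraphOrientation G, Invariant1 o →
      (∀ o' : GraphOrientation G, o.maxOutDeg ≤ o'.maxOutDeg) ∧
      o.maxOutDeg =
        (Finset.univ.filter fun S : Finset V => S.Nonempty).sup
          (fun S => edgeCount G S ⌈/⌉ S.card) := by
  have hdensity_le : ∀ o' : GraphOrientation G,
      (univ.filter fun S : Finset V => S.Nonempty).sup (fun S => edgeCount G S ⌈/⌉ #S) ≤
        o'.maxOutDeg :=
    fun o' => Finset.sup_le fun S hS => o'.ceilDiv_edgeCount_le_maxOutDeg (mem_filter.1 hS).2
  refine ⟨exists_invariant1 G, fun o ho => ?_⟩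
  have hle := GraphOrientation.maxOutDeg_le_sup_ceilDiv_of_invariant1 ho
  exact ⟨fun o' => hle.trans (hdensity_le o'), hle.antisymm (hdensity_le o)⟩

/-- For every finite simple graph `G` on a nonempty vertex set, the
minimum over all orientations of the maximum out-degree equals the maximum over all
nonempty `S ⊆ V` of `⌈|E(S)|/|S|⌉`. In particular there exists an orientation with no
improving path between any two vertices (Invariant 1), and any such orientation
attains the minimum. -/
theorem min_maxOutDeg_eq_max_ceil_density {V : Type*} [Fintype V] [DecidableEq V]
    [Nonempty V] (G : SimpleGraph V) [DecidableRel G.Adj] :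
    (∃ o : GraphOrientation G, Invariant1 o) ∧
    ∀ o : GraphOrientation G, Invariant1 o →
      (∀ o' : GraphOrientation G, o.maxOutDeg ≤ o'.maxOutDeg) ∧
      o.maxOutDeg =
        (Finset.univ.filter fun S : Finset V => S.Nonempty).sup
          (fun S => edgeCount G S ⌈/⌉ S.card) :=
  min_maxOutDeg_eq_max_ceil_density_general G
end
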